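/- At x1 = -ν we have ξ(-ν) = 0, so φ(-ν) = -2ν²η(-ν)², which is strictly negative since η(-ν) = (e-ν)(d-ν) > 0; hence by the intermediate value theorem φ has a zero in the open interval (-e, -ν). -/
import Mathlib


/-- At x1 = -ν: ξ(-ν) = 0, φ(-ν) = -2ν²η(-ν)² < 0 since η(-ν) = (e-ν)(d-ν) > 0;
hence by the intermediate value theorem φ has a zero in (-e, -ν). -/
theorem phi_negative_at_minus_nu_and_root
    (α ν e d : ℝ) (hα : 0 < α) (hν : 0 < ν) (hνe : ν < e) (hed : e < d) :
    let η : ℝ → ℝ := fun x1 => (x1 + e) * (x1 + d)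
    let ξ : ℝ → ℝ := fun x1 => x1 ^ 2 - ν ^ 2
    let φ : ℝ → ℝ := fun x1 =>
      -2 * x1 ^ 2 * (η x1) ^ 2 + α * e * d * ξ x1 * (α * ν ^ 2 * ξ x1 - 1) * η x1
        + (3 * x1 ^ 2 + 2 * (e + d) * x1) * ξ x1 * η x1
        + α ^ 2 * e ^ 2 * d ^ 2 * (ξ x1) ^ 3
    ξ (-ν) = 0 ∧ η (-ν) = (e - ν) * (d - ν) ∧ 0 < η (-ν) ∧
      φ (-ν) = -2 * ν ^ 2 * (η (-ν)) ^ 2 ∧ φ (-ν) < 0 ∧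
      ∃ x1star ∈ Set.Ioo (-e) (-ν), φ x1star = 0 := by
  intro η ξ φ
  have hξ : ξ (-ν) = 0 := by simp [ξ]
  have hη : η (-ν) = (e - ν) * (d - ν) := by simp [η]; ring
  have hηpos : 0 < η (-ν) := by rw [hη]; nlinarith
  have hφν : φ (-ν) = -2 * ν ^ 2 * (η (-ν)) ^ 2 := by
    simp only [φ, hξ]; ring
  have hφνneg : φ (-ν) < 0 := by
    rw [hφν]
    have : 0 < ν ^ 2 * (η (-ν)) ^ 2 := by positivity
    linarith
  refine ⟨hξ, hη, hηpos, hφν, hφνneg, ?_⟩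
  have hφe : 0 < φ (-e) := by
    have : φ (-e) = α ^ 2 * e ^ 2 * d ^ 2 * (e ^ 2 - ν ^ 2) ^ 3 := by
      simp only [φ, η, ξ]; ring
    rw [this]
    have he : 0 < e := hν.trans hνe
    have hd : 0 < d := he.trans hed
    have h1 : 0 < e ^ 2 - ν ^ 2 := by nlinarith
    exact mul_pos (by positivity) (pow_pos h1 3)
  have hcont : ContinuousOn φ (Set.Icc (-e) (-ν)) := by
    apply Continuous.continuousOn; simp only [φ, η, ξ]; fun_prop
  have h := intermediate_value_Ioo' (by linarith : (-e : ℝ) ≤ -ν) hcont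
  have h0 : (0:ℝ) ∈ Set.Ioo (φ (-ν)) (φ (-e)) := ⟨hφνneg, hφe⟩
  obtain ⟨x, hx, hfx⟩ := h h0
  exact ⟨x, hx, hfx⟩
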